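/- arXiv:1312.3248 — 6 statements merged into one kernel-verified Lean document; each statement's English description precedes it below -/
import Mathlib

section
/- Let Ψ = (I, ≤) be a finite partially ordered set, let Θ be a real number with 0 < Θ < 1, and let F be a decreasing predicate on the antichains of Ψ (i.e., A ⊑ B and F(B) imply F(A)). Then there exists a finite multiset D of subsets of I (a database of transactions) such that for every antichain A of Ψ, F(A) holds if and only if supp_{D,Ψ}(A) > Θ, where supp_{D,Ψ}(A) is 0 if D is empty and otherwise equals the number of transactions T ∈ D (counted with multiplicity) such that every i ∈ A satisfies i ≤ i' for some i' ∈ T, divided by the total size of D. -/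
open scoped Classical in
/-- The support of an itemset `A` w.r.t. a database `D` (a multiset of transactions,
each a subset of the item domain) and a taxonomy (the partial order on items):
`0` if `D` is empty, and otherwise the fraction of transactions `T ∈ D` (with
multiplicity) such that every `i ∈ A` satisfies `i ≤ i'` for some `i' ∈ T`. -/
noncomputable def supp {α : Type*} [PartialOrder α] (D : Multiset (Set α)) (A : Set α) : ℝ :=
  if D = 0 then 0
  else
    (Multiset.card (D.filter (fun T => ∀ i ∈ A, ∃ i' ∈ T, i ≤ i')) : ℝ) /
      (Multiset.card D : ℝ)

open scoped Classical in
/-- For every threshold `0 < Θ < 1` and every decreasing predicate `F` on the antichains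
of a finite taxonomy `Ψ = (I, ≤)` (decreasing w.r.t. `⊑`, where `A ⊑ B` iff every
`a ∈ A` satisfies `a ≤ b` for some `b ∈ B`), there is a database `D` (a finite multiset
of subsets of `I`) such that an antichain `A` satisfies `F` iff its support in `D`
exceeds `Θ`. -/
theorem monotone_predicate_realizable_by_database
    {α : Type*} [Fintype α] [PartialOrder α]
    (Θ : ℝ) (hΘ0 : 0 < Θ) (hΘ1 : Θ < 1)
    (F : Set α → Prop)
    (hF : ∀ A B : Set α, IsAntichain (· ≤ ·) A → IsAntichain (· ≤ ·) B →
      (∀ a ∈ A, ∃ b ∈ B, a ≤ b) → F B → F A) :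
    ∃ D : Multiset (Set α),
      ∀ A : Set α, IsAntichain (· ≤ ·) A → (F A ↔ supp D A > Θ) := by
  by_cases h0 : F ∅
  · -- main case
    set G : Finset (Set α) := Finset.univ.filter (fun B => IsAntichain (· ≤ ·) B ∧ F B) with hG
    have hGne : (∅ : Set α) ∈ G := by
      simp [hG, h0, Set.Subsingleton.isAntichain Set.subsingleton_empty _]
    set N : ℕ := G.card with hNdef
    have hN : 0 < N := Finset.card_pos.mpr ⟨∅, hGne⟩
    set m : ℕ := ⌊Θ * N / (1 - Θ)⌋₊ with hmdef
    have h1Θ : (0:ℝ) < 1 - Θ := by linarith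
    have hx0 : (0:ℝ) ≤ Θ * N / (1 - Θ) := by positivity
    have h1 : (m:ℝ) ≤ Θ * N / (1 - Θ) := Nat.floor_le hx0
    have h2 : Θ * N / (1 - Θ) < m + 1 := Nat.lt_floor_add_one _
    have h1' : (m:ℝ) * (1 - Θ) ≤ Θ * N := (le_div_iff₀ h1Θ).mp h1
    have h2' : Θ * (N:ℝ) < ((m:ℝ) + 1) * (1 - Θ) := (div_lt_iff₀ h1Θ).mp h2
    have hle : (m:ℝ) ≤ Θ * ((m:ℝ) + N) := by nlinarith
    have hlt : Θ * ((m:ℝ) + N) < (m:ℝ) + 1 := by nlinarith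
    set f : Set α → Set α := fun B => {x | ∃ b ∈ B, x ≤ b} with hf
    set D : Multiset (Set α) :=
      Multiset.replicate m (Set.univ : Set α) + G.val.map f with hD
    refine ⟨D, fun A hA => ?_⟩
    have hcard : Multiset.card D = m + N := by simp [hD, hNdef]
    have hDne : D ≠ 0 := by
      intro h
      have := congrArg Multiset.card h
      simp [hcard] at this
      omega
    set P : Set α → Prop := fun T => ∀ i ∈ A, ∃ i' ∈ T, i ≤ i' with hP
    have hPuniv : P Set.univ := fun i _ => ⟨i, trivial, le_refl i⟩
    have hPf : ∀ B : Set α, P (f B) ↔ ∀ a ∈ A, ∃ b ∈ B, a ≤ b := by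
      intro B
      constructor
      · intro h a ha
        obtain ⟨i', ⟨b, hb, hi'b⟩, hai'⟩ := h a ha
        exact ⟨b, hb, le_trans hai' hi'b⟩
      · intro h a ha
        obtain ⟨b, hb, hab⟩ := h a ha
        exact ⟨b, ⟨b, hb, le_refl b⟩, hab⟩
    set k : ℕ := (G.filter (fun B => ∀ a ∈ A, ∃ b ∈ B, a ≤ b)).card with hk
    have hfilter : Multiset.card (D.filter P) = m + k := by
      rw [hD, Multiset.filter_add]
      simp only [Multiset.card_add]
      congr 1
      · rw [Multiset.filter_eq_self.mpr]
        · simp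
        · intro a ha
          rw [Multiset.eq_of_mem_replicate ha]
          exact hPuniv
      · rw [Multiset.filter_map]
        rw [Multiset.card_map]
        rw [hk]
        congr 1
        apply Multiset.filter_congr
        intro B _
        exact (by simpa using hPf B : (P ∘ f) B ↔ _)
    have hsupp : supp D A = ((m:ℝ) + k) / ((m:ℝ) + N) := by
      rw [supp, if_neg hDne]
      have heq : @Multiset.filter (Set α) (fun T => ∀ i ∈ A, ∃ i' ∈ T, i ≤ i')
          (fun T => Classical.propDecidable _) D = Multiset.filter P D :=
        @Multiset.filter_congr (Set α) _ P (fun T => Classical.propDecidable _) _ D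
          (fun x _ => Iff.rfl)
      rw [heq, hfilter, hcard]
      push_cast
      ring_nf
    have hden : (0:ℝ) < (m:ℝ) + N := by positivity
    by_cases hFA : F A
    · have hkpos : 1 ≤ k := by
        rw [hk]
        apply Finset.card_pos.mpr
        exact ⟨A, Finset.mem_filter.mpr ⟨Finset.mem_filter.mpr ⟨Finset.mem_univ _, hA, hFA⟩,
          fun a ha => ⟨a, ha, le_refl a⟩⟩⟩
      have : Θ < ((m:ℝ) + k) / ((m:ℝ) + N) := by
        rw [lt_div_iff₀ hden]
        have : ((1:ℝ)) ≤ (k:ℝ) := by exact_mod_cast hkpos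
        nlinarith
      simp only [hsupp]
      exact iff_of_true hFA this
    · have hk0 : k = 0 := by
        rw [hk, Finset.card_eq_zero]
        apply Finset.filter_eq_empty_iff.mpr
        intro B hB hAB
        obtain ⟨-, hBanti, hFB⟩ := Finset.mem_filter.mp hB
        exact hFA (hF A B hA hBanti hAB hFB)
      have : ¬ (Θ < ((m:ℝ) + k) / ((m:ℝ) + N)) := by
        rw [hk0]
        push_cast
        rw [not_lt, div_le_iff₀ hden]
        nlinarith
      simp only [hsupp]
      exact iff_of_false hFA this
  · refine ⟨0, fun A hA => ?_⟩
    have hnFA : ¬ F A := fun hFA => h0 (hF ∅ A (Set.Subsingleton.isAntichain Set.subsingleton_empty _)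
      hA (by simp) hFA)
    have : supp (0 : Multiset (Set α)) A = 0 := by simp [supp]
    rw [this]
    exact iff_of_false hnFA (by linarith)
end

section
/- Let Ψ be a finite partially ordered set of width w (i.e., w is the maximum cardinality of an antichain of Ψ). Then the itemset taxonomy of Ψ—the antichains of Ψ ordered by ⊑—contains an antichain of size binomial(w, ⌊w/2⌋); that is, the width of I(Ψ) is at least binomial(w, ⌊w/2⌋). In particular, if W is an antichain of Ψ with |W| = w, then the ⌊w/2⌋-element subsets of W are pairwise incomparable under ⊑. -/
/-- Let `Ψ` be a finite poset of width `w` and `W` an antichain of `Ψ` of cardinality `w`.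
Then the `⌊w/2⌋`-element subsets of `W` are pairwise incomparable under `⊑` (where
`A ⊑ B` iff every `a ∈ A` satisfies `a ≤ b` for some `b ∈ B`), and hence the itemset
taxonomy of `Ψ` (the antichains of `Ψ` ordered by `⊑`) contains an antichain of size
`binomial(w, ⌊w/2⌋)`; i.e., its width is at least `binomial(w, ⌊w/2⌋)`. -/
theorem width_itemset_taxonomy_ge_central_binom
    {α : Type*} [Fintype α] [PartialOrder α] [DecidableEq α]
    (w : ℕ)
    (hwidth : ∀ A : Finset α, IsAntichain (· ≤ ·) (A : Set α) → A.card ≤ w)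
    (W : Finset α) (hW : IsAntichain (· ≤ ·) (W : Set α)) (hWcard : W.card = w) :
    (∀ A B : Finset α, A ⊆ W → B ⊆ W → A.card = w / 2 → B.card = w / 2 → A ≠ B →
      ¬ (∀ a ∈ A, ∃ b ∈ B, a ≤ b)) ∧
    ∃ 𝒜 : Finset (Finset α),
      𝒜.card = w.choose (w / 2) ∧
      (∀ A ∈ 𝒜, IsAntichain (· ≤ ·) (A : Set α)) ∧
      (∀ A ∈ 𝒜, ∀ B ∈ 𝒜, A ≠ B → ¬ (∀ a ∈ A, ∃ b ∈ B, a ≤ b)) := by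
  have key : ∀ A B : Finset α, A ⊆ W → B ⊆ W → A.card = w / 2 → B.card = w / 2 → A ≠ B →
      ¬ (∀ a ∈ A, ∃ b ∈ B, a ≤ b) := by
    intro A B hA hB hAc hBc hne h
    apply hne
    have hsub : A ⊆ B := by
      intro a ha
      obtain ⟨b, hb, hab⟩ := h a ha
      have : a = b := by
        by_contra hne'
        exact hW (hA ha) (hB hb) hne' hab
      rwa [this]
    exact Finset.eq_of_subset_of_card_le hsub (le_of_eq (hBc.trans hAc.symm))
  refine ⟨key, W.powersetCard (w / 2), ?_, ?_, ?_⟩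
  · rw [Finset.card_powersetCard, hWcard]
  · intro A hA
    rw [Finset.mem_powersetCard] at hA
    exact hW.subset (Finset.coe_subset.2 hA.1)
  · intro A hA B hB hne
    rw [Finset.mem_powersetCard] at hA hB
    exact key A B hA.1 hB.1 hA.2 hB.2 hne
end

section
/- Let Ψ be a finite partially ordered set of width w. Then the number of antichains of the itemset taxonomy I(Ψ) (i.e., the number of sets of antichains of Ψ that are pairwise incomparable under ⊑) is at least 2^{binomial(w, ⌊w/2⌋)}. -/
/-- Let `Ψ` be a finite poset of width `w` (there is an antichain of cardinality `w`, and
every antichain has cardinality at most `w`). Then the number of antichains of the itemset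
taxonomy `I(Ψ)`, i.e., the number of families of antichains of `Ψ` that are pairwise
incomparable under `⊑` (where `A ⊑ B` iff every `a ∈ A` satisfies `a ≤ b` for some
`b ∈ B`), is at least `2 ^ binomial(w, ⌊w/2⌋)`. -/
theorem card_solution_taxonomy_ge
    {α : Type*} [Fintype α] [PartialOrder α] [DecidableEq α]
    (w : ℕ)
    (hex : ∃ W : Finset α, IsAntichain (· ≤ ·) (W : Set α) ∧ W.card = w)
    (hwidth : ∀ A : Finset α, IsAntichain (· ≤ ·) (A : Set α) → A.card ≤ w) :
    2 ^ w.choose (w / 2) ≤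
      Set.ncard {𝒜 : Finset (Finset α) |
        (∀ A ∈ 𝒜, IsAntichain (· ≤ ·) (A : Set α)) ∧
        ∀ A ∈ 𝒜, ∀ B ∈ 𝒜, A ≠ B → ¬ (∀ a ∈ A, ∃ b ∈ B, a ≤ b)} := by
  obtain ⟨W, hW, hWcard⟩ := hex
  set P : Finset (Finset α) := Finset.powersetCard (w / 2) W with hP
  have hsub : (↑P.powerset : Set (Finset (Finset α))) ⊆
      {𝒜 : Finset (Finset α) |
        (∀ A ∈ 𝒜, IsAntichain (· ≤ ·) (A : Set α)) ∧
        ∀ A ∈ 𝒜, ∀ B ∈ 𝒜, A ≠ B → ¬ (∀ a ∈ A, ∃ b ∈ B, a ≤ b)} := by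
    intro 𝒜 h𝒜
    simp only [Finset.mem_coe, Finset.mem_powerset] at h𝒜
    have hmem : ∀ A ∈ 𝒜, A ⊆ W ∧ A.card = w / 2 := by
      intro A hA
      have := h𝒜 hA
      rwa [hP, Finset.mem_powersetCard] at this
    constructor
    · intro A hA
      exact hW.subset (Finset.coe_subset.mpr (hmem A hA).1)
    · intro A hA B hB hne hle
      apply hne
      have hAB : A ⊆ B := by
        intro a ha
        obtain ⟨b, hb, hab⟩ := hle a ha
        have haW : a ∈ W := (hmem A hA).1 ha
        have hbW : b ∈ W := (hmem B hB).1 hb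
        by_cases h : a = b
        · exact h ▸ hb
        · exact absurd hab (hW haW hbW h)
      exact Finset.eq_of_subset_of_card_le hAB
        (le_of_eq ((hmem B hB).2.trans (hmem A hA).2.symm))
  calc 2 ^ w.choose (w / 2) = P.powerset.card := by
        rw [Finset.card_powerset, hP, Finset.card_powersetCard, hWcard]
    _ = (↑P.powerset : Set (Finset (Finset α))).ncard := (Set.ncard_coe_finset _).symm
    _ ≤ _ := Set.ncard_le_ncard hsub (Set.toFinite _)
end

section
/- Let Ψ = (I, ≤) be a finite partially ordered set. Every strictly increasing chain A₀ ⊏ A₁ ⊏ ⋯ ⊏ Aₙ of antichains of Ψ under the order ⊑ satisfies n ≤ |I|; equivalently, every chain in the itemset taxonomy I(Ψ) has at most |I| + 1 elements. -/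
/-- In a finite poset `Ψ = (I, ≤)`, every strictly increasing chain
`A₀ ⊏ A₁ ⊏ ⋯ ⊏ Aₙ` of antichains under the order `⊑` (where `A ⊑ B` iff every `a ∈ A`
satisfies `a ≤ b` for some `b ∈ B`) satisfies `n ≤ |I|`; equivalently, every chain in
the itemset taxonomy `I(Ψ)` has at most `|I| + 1` elements. -/
theorem chain_length_in_itemset_taxonomy
    {α : Type*} [Fintype α] [PartialOrder α]
    (n : ℕ) (A : ℕ → Set α)
    (hanti : ∀ k ≤ n, IsAntichain (· ≤ ·) (A k))
    (hchain : ∀ k < n, (∀ a ∈ A k, ∃ b ∈ A (k + 1), a ≤ b) ∧ A k ≠ A (k + 1)) :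
    n ≤ Fintype.card α := by
  set D : ℕ → Set α := fun k => {x | ∃ a ∈ A k, x ≤ a} with hDdef
  have hsub : ∀ k < n, D k ⊂ D (k + 1) := by
    intro k hk
    obtain ⟨hle, hne⟩ := hchain k hk
    refine HasSubset.Subset.ssubset_of_ne ?_ ?_
    · rintro x ⟨a, ha, hxa⟩
      obtain ⟨b, hb, hab⟩ := hle a ha
      exact ⟨b, hb, hxa.trans hab⟩
    · intro hDD
      apply hne
      have h1 := hanti k (le_of_lt hk)
      have h2 := hanti (k + 1) hk
      have key : ∀ (B C : Set α), IsAntichain (· ≤ ·) B →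
          {x | ∃ a ∈ B, x ≤ a} = {x | ∃ a ∈ C, x ≤ a} →
          B ⊆ C := by
        intro B C hB hEq a ha
        have haC : a ∈ {x | ∃ c ∈ C, x ≤ c} := by
          rw [← hEq]; exact ⟨a, ha, le_refl a⟩
        obtain ⟨b, hb, hab⟩ := haC
        have hbB : b ∈ {x | ∃ c ∈ B, x ≤ c} := by
          rw [hEq]; exact ⟨b, hb, le_refl b⟩
        obtain ⟨a', ha', hba'⟩ := hbB
        have haa' : a ≤ a' := hab.trans hba'
        have : a = a' := by
          by_contra hne'
          exact hB ha ha' hne' haa'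
        have : a = b := le_antisymm hab (this ▸ hba')
        exact this ▸ hb
      exact Set.Subset.antisymm (key _ _ h1 hDD) (key _ _ h2 hDD.symm)
  have hcard : ∀ k ≤ n, k ≤ (D k).ncard := by
    intro k hk
    induction k with
    | zero => exact Nat.zero_le _
    | succ m ih =>
      have hm : m < n := hk
      have h1 : m ≤ (D m).ncard := ih (le_of_lt hm)
      have h2 : (D m).ncard < (D (m + 1)).ncard :=
        Set.ncard_lt_ncard (hsub m hm) (Set.toFinite _)
      omega
  have := hcard n le_rfl
  calc n ≤ (D n).ncard := this
    _ ≤ (Set.univ : Set α).ncard := Set.ncard_le_ncard (Set.subset_univ _) (Set.toFinite _)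
    _ = Fintype.card α := by rw [Set.ncard_univ, Nat.card_eq_fintype_card]
end

section
/- Let Ψ = (I, ≤) be a finite partially ordered set and let w be the width of the itemset taxonomy I(Ψ) (the antichains of Ψ ordered by ⊑). Then the number of antichains of I(Ψ) (i.e., the cardinality of the solution taxonomy S(Ψ)) is at most (|I| + 2)^w. -/
/-!
Sending an antichain `A` of `Ψ` to its down-closure identifies `I(Ψ)` with a family of lower
sets of `Ψ` ordered by inclusion, so `S(Ψ)` injects into the antichains of a family of lower sets
of width `w`. By Dilworth's theorem (in Galvin's proof) that family is covered by `w` chains, and a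
chain of lower sets has at most `|I| + 1` members. An antichain meets each chain in at most one
member, which leaves at most `|I| + 2` choices per chain.
-/

open Finset

section Dilworth

variable {β : Type*} [PartialOrder β]

def WidthLE (S : Finset β) (k : ℕ) : Prop :=
  ∀ T ⊆ S, IsAntichain (· ≤ ·) (T : Set β) → #T ≤ k

lemma WidthLE.mono {S S' : Finset β} {k : ℕ} (h : WidthLE S k) (hS' : S' ⊆ S) :
    WidthLE S' k :=
  fun T hT => h T (hT.trans hS')

structure IsChainColoring (S : Finset β) (k : ℕ) (c : β → ℕ) : Prop where
  lt : ∀ x ∈ S, c x < k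
  comparable : ∀ x ∈ S, ∀ y ∈ S, c x = c y → x ≤ y ∨ y ≤ x

namespace IsChainColoring

variable {S T : Finset β} {k : ℕ} {c : β → ℕ}

lemma injOn (hc : IsChainColoring S k c) (hTS : T ⊆ S) (hT : IsAntichain (· ≤ ·) (T : Set β)) :
    Set.InjOn c T := by
  intro x hx y hy hxy
  by_contra hne
  rcases hc.comparable x (hTS hx) y (hTS hy) hxy with h | h
  · exact hT hx hy hne h
  · exact hT hy hx (Ne.symm hne) h

lemma exists_mem_color_eq (hc : IsChainColoring S k c) (hTS : T ⊆ S)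
    (hT : IsAntichain (· ≤ ·) (T : Set β)) (hcard : #T = k) {i : ℕ} (hi : i < k) :
    ∃ y ∈ T, c y = i := by
  have hsub : T.image c ⊆ range k := by
    intro j hj
    obtain ⟨y, hy, rfl⟩ := mem_image.1 hj
    exact mem_range.2 (hc.lt y (hTS hy))
  have himage : T.image c = range k := by
    refine eq_of_subset_of_card_le hsub ?_
    rw [card_image_of_injOn (hc.injOn hTS hT), card_range, hcard]
  obtain ⟨y, hy, hyi⟩ := mem_image.1 (himage ▸ mem_range.2 hi : i ∈ T.image c)
  exact ⟨y, hy, hyi⟩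

lemma exists_greatest (hc : IsChainColoring S k c) {M : Finset β} (hMS : M ⊆ S) {i : ℕ}
    (hi : ∃ y ∈ M, c y = i) : ∃ x ∈ M, c x = i ∧ ∀ y ∈ M, c y = i → y ≤ x := by
  obtain ⟨x, hxmax⟩ := (M.filter (c · = i)).exists_maximal (by simpa [Finset.Nonempty] using hi)
  obtain ⟨hxM, hxi⟩ := mem_filter.1 hxmax.prop
  refine ⟨x, hxM, hxi, fun y hyM hyi => ?_⟩
  rcases hc.comparable y (hMS hyM) x (hMS hxM) (hyi.trans hxi.symm) with h | h
  · exact h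
  · exact hxmax.le_of_ge (mem_filter.2 ⟨hyM, hyi⟩) h

lemma insertChain [DecidableEq β] (hc : IsChainColoring (S \ T) k c)
    (hT : IsChain (· ≤ ·) (T : Set β)) :
    IsChainColoring S (k + 1) (fun x => if x ∈ T then k else c x) where
  lt x hx := by
    split_ifs with hxT
    · omega
    · exact (hc.lt x (mem_sdiff.2 ⟨hx, hxT⟩)).trans (Nat.lt_succ_self k)
  comparable x hx y hy hxy := by
    by_cases hxT : x ∈ T <;> by_cases hyT : y ∈ T <;> simp only [hxT, hyT, if_true, if_false] at hxy
    · rcases eq_or_ne x y with rfl | hne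
      · exact Or.inl le_rfl
      · exact hT hxT hyT hne
    · exact absurd hxy (hc.lt y (mem_sdiff.2 ⟨hy, hyT⟩)).ne'
    · exact absurd hxy (hc.lt x (mem_sdiff.2 ⟨hx, hxT⟩)).ne
    · exact hc.comparable x (mem_sdiff.2 ⟨hx, hxT⟩) y (mem_sdiff.2 ⟨hy, hyT⟩) hxy

lemma isChain_filter (hc : IsChainColoring S k c) (i : ℕ) :
    IsChain (· ≤ ·) ((S.filter (c · = i) : Finset β) : Set β) := by
  intro y hy z hz _
  obtain ⟨hyS, hyi⟩ := mem_filter.1 hy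
  obtain ⟨hzS, hzi⟩ := mem_filter.1 hz
  exact hc.comparable y hyS z hzS (hyi.trans hzi.symm)

lemma filter_mem_insert_image_singleton [DecidableEq β] (hc : IsChainColoring S k c)
    (hTS : T ⊆ S) (hT : IsAntichain (· ≤ ·) (T : Set β)) (i : ℕ) :
    T.filter (c · = i) ∈ insert ∅ ((S.filter (c · = i)).image ({·})) := by
  rcases (T.filter (c · = i)).eq_empty_or_nonempty with h | ⟨y, hy⟩
  · rw [h]
    exact mem_insert_self _ _
  obtain ⟨hyT, hyi⟩ := mem_filter.1 hy
  have hsingle : T.filter (c · = i) = {y} := by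
    refine eq_singleton_iff_unique_mem.2 ⟨hy, fun z hz => ?_⟩
    obtain ⟨hzT, hzi⟩ := mem_filter.1 hz
    exact hc.injOn hTS hT hzT hyT (hzi.trans hyi.symm)
  rw [hsingle]
  exact mem_insert_of_mem (mem_image_of_mem _ (mem_filter.2 ⟨hTS hyT, hyi⟩))

lemma subset_of_forall_filter_eq (hc : IsChainColoring S k c) {U V : Finset β} (hU : U ⊆ S)
    (hUV : ∀ i < k, U.filter (c · = i) = V.filter (c · = i)) : U ⊆ V := by
  intro y hy
  have hyU : y ∈ U.filter (c · = c y) := mem_filter.2 ⟨hy, rfl⟩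
  rw [hUV _ (hc.lt y (hU hy))] at hyU
  exact (mem_filter.1 hyU).1

/-- An antichain is determined by its traces on the colour classes, each empty or a singleton. -/
theorem ncard_antichains_le (hc : IsChainColoring S k c) {m : ℕ}
    (hm : ∀ C ⊆ S, IsChain (· ≤ ·) (C : Set β) → #C ≤ m) :
    {T : Finset β | T ⊆ S ∧ IsAntichain (· ≤ ·) (T : Set β)}.ncard ≤ (m + 1) ^ k := by
  classical
  set choices : Fin k → Finset (Finset β) := fun i => insert ∅ ((S.filter (c · = i)).image ({·}))
  have hinj : Set.InjOn (fun T i => T.filter (c · = (i : Fin k)))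
      {T : Finset β | T ⊆ S ∧ IsAntichain (· ≤ ·) (T : Set β)} := by
    rintro T ⟨hTS, -⟩ T' ⟨hT'S, -⟩ h
    have h' : ∀ i < k, T.filter (c · = i) = T'.filter (c · = i) := fun i hi => congrFun h ⟨i, hi⟩
    exact (hc.subset_of_forall_filter_eq hTS h').antisymm
      (hc.subset_of_forall_filter_eq hT'S fun i hi => (h' i hi).symm)
  calc _ ≤ ((Fintype.piFinset choices : Finset (Fin k → Finset β)) : Set _).ncard :=
        Set.ncard_le_ncard_of_injOn _ (fun T hT =>
          Fintype.mem_piFinset.2 fun i : Fin k => hc.filter_mem_insert_image_singleton hT.1 hT.2 i)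
          hinj
    _ = ∏ i, #(choices i) := by
      rw [Set.ncard_coe_finset, Fintype.card_piFinset]
    _ ≤ (m + 1) ^ k := by
      refine (prod_le_pow_card _ _ _ fun i _ => ?_).trans_eq (by rw [card_univ, Fintype.card_fin])
      calc _ ≤ #((S.filter (c · = i)).image ({·})) + 1 := card_insert_le _ _
        _ ≤ #(S.filter (c · = i)) + 1 := Nat.add_le_add_right card_image_le 1
        _ ≤ m + 1 := Nat.add_le_add_right (hm _ (filter_subset _ _) (hc.isChain_filter i)) 1

/-- Galvin's choice: in each colour class, the greatest element lying in some antichain of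
maximal size. -/
lemma exists_tops [DecidableEq β] (hc : IsChainColoring S (k + 1) c) {T₀ : Finset β}
    (hT₀S : T₀ ⊆ S) (hT₀ : IsAntichain (· ≤ ·) (T₀ : Set β)) (hT₀card : #T₀ = k + 1) :
    ∃ x : ℕ → β, IsAntichain (· ≤ ·) (((range (k + 1)).image x : Finset β) : Set β) ∧
      ∀ i < k + 1, x i ∈ S ∧ c (x i) = i ∧ ∀ T ⊆ S, IsAntichain (· ≤ ·) (T : Set β) →
        #T = k + 1 → ∀ y ∈ T, c y = i → y ≤ x i := by
  classical
  set M := S.filter (fun y => ∃ T ⊆ S, IsAntichain (· ≤ ·) (T : Set β) ∧ #T = k + 1 ∧ y ∈ T)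
  have hM : ∀ T ⊆ S, IsAntichain (· ≤ ·) (T : Set β) → #T = k + 1 → ∀ y ∈ T, y ∈ M :=
    fun T hTS hT hcard y hy => mem_filter.2 ⟨hTS hy, T, hTS, hT, hcard, hy⟩
  have htop : ∀ i < k + 1, ∃ x ∈ M, c x = i ∧ ∀ y ∈ M, c y = i → y ≤ x := by
    intro i hi
    obtain ⟨y, hy, hyi⟩ := hc.exists_mem_color_eq hT₀S hT₀ hT₀card hi
    exact hc.exists_greatest (filter_subset _ _) ⟨y, hM T₀ hT₀S hT₀ hT₀card y hy, hyi⟩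
  obtain ⟨y₀, -⟩ := card_pos.1 (by omega : 0 < #T₀)
  have : Nonempty β := ⟨y₀⟩
  choose! x hxM hxc hxtop using htop
  refine ⟨x, ?_, fun i hi => ⟨mem_of_mem_filter _ (hxM i hi), hxc i hi,
    fun T hTS hT hcard y hy hyi => hxtop i hi y (hM T hTS hT hcard y hy) hyi⟩⟩
  simp only [coe_image, coe_range]
  rintro _ ⟨i, hi, rfl⟩ _ ⟨j, hj, rfl⟩ hne hle
  obtain ⟨T, hTS, hT, hcard, hxjT⟩ := (mem_filter.1 (hxM j hj)).2
  obtain ⟨y, hyT, hyi⟩ := hc.exists_mem_color_eq hTS hT hcard hi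
  have hyj : y ≠ x j := by
    rintro rfl
    exact hne (congrArg x ((hxc j hj).symm.trans hyi).symm)
  exact hT hyT hxjT hyj ((hxtop i hi y (hM T hTS hT hcard y hyT) hyi).trans hle)

end IsChainColoring

lemma exists_le_of_maximal [DecidableEq β] {S A : Finset β} {k : ℕ} {a : β} (hS : WidthLE S k)
    (ha : Maximal (· ∈ S) a) (hAS : A ⊆ S.erase a) (hA : IsAntichain (· ≤ ·) (A : Set β))
    (hAcard : #A = k) : ∃ b ∈ A, b ≤ a := by
  by_contra! hnone
  have haA : a ∉ A := fun h => (mem_erase.1 (hAS h)).1 rfl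
  have hanti : IsAntichain (· ≤ ·) ((insert a A : Finset β) : Set β) := by
    rw [coe_insert]
    exact hA.insert (fun b hb _ hba => hnone b hb hba)
      fun b hb _ hab => hnone b hb (ha.2 (mem_of_mem_erase (hAS hb)) hab)
  have := hS _ (insert_subset ha.prop (hAS.trans (erase_subset a S))) hanti
  rw [card_insert_of_notMem haA, hAcard] at this
  omega

/-- Galvin's inductive step for Dilworth's theorem: after removing a maximal element `a`, either
`a` alone or `a` on top of a lower part of a colour class of `S.erase a` is a chain whose removal
lowers the width. -/
lemma exists_chain_widthLE_sdiff [DecidableEq β] {S : Finset β} {k : ℕ} {c : β → ℕ} {a : β}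
    (hS : WidthLE S (k + 1)) (ha : Maximal (· ∈ S) a) (hc : IsChainColoring (S.erase a) (k + 1) c) :
    ∃ K ⊆ S, a ∈ K ∧ IsChain (· ≤ ·) (K : Set β) ∧ WidthLE (S \ K) k := by
  classical
  by_cases hsmall : WidthLE (S.erase a) k
  · refine ⟨{a}, singleton_subset_iff.2 ha.prop, mem_singleton_self a,
      by rw [coe_singleton]; exact Set.subsingleton_singleton.isChain, ?_⟩
    rwa [sdiff_singleton_eq_erase]
  have hS' : WidthLE (S.erase a) (k + 1) := hS.mono (erase_subset a S)
  obtain ⟨T₀, hT₀S, hT₀, hT₀card⟩ :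
      ∃ T ⊆ S.erase a, IsAntichain (· ≤ ·) (T : Set β) ∧ #T = k + 1 := by
    simp only [WidthLE, not_forall, not_le] at hsmall
    obtain ⟨T, hTS, hT, hlt⟩ := hsmall
    exact ⟨T, hTS, hT, le_antisymm (hS' T hTS hT) hlt⟩
  obtain ⟨x, hxanti, hx⟩ := hc.exists_tops hT₀S hT₀ hT₀card
  set A := (range (k + 1)).image x
  have hAS : A ⊆ S.erase a := by
    simp only [A, image_subset_iff, mem_range]
    exact fun i hi => (hx i hi).1
  have hAcard : #A = k + 1 := by
    rw [card_image_of_injOn, card_range]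
    intro i hi j hj hij
    rw [← (hx i (mem_range.1 hi)).2.1, ← (hx j (mem_range.1 hj)).2.1, hij]
  obtain ⟨_, hxiA, hxia⟩ := exists_le_of_maximal hS ha hAS hxanti hAcard
  obtain ⟨i, hi, rfl⟩ := mem_image.1 hxiA
  replace hi := mem_range.1 hi
  set K := insert a ((S.erase a).filter (fun z => c z = i ∧ z ≤ x i))
  refine ⟨K, insert_subset ha.prop ((filter_subset _ _).trans (erase_subset a S)),
    mem_insert_self _ _, ?_, ?_⟩
  · rw [coe_insert]
    refine IsChain.insert (fun y hy z hz _ => ?_) (fun b hb _ => Or.inr ?_)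
    · obtain ⟨hyS, hyi, -⟩ := mem_filter.1 hy
      obtain ⟨hzS, hzi, -⟩ := mem_filter.1 hz
      exact hc.comparable y hyS z hzS (hyi.trans hzi.symm)
    · exact (mem_filter.1 hb).2.2.trans hxia
  · intro T hTK hT
    have hTS : T ⊆ S.erase a := fun y hy => by
      obtain ⟨hyS, hyK⟩ := mem_sdiff.1 (hTK hy)
      exact mem_erase.2 ⟨fun h => hyK (h ▸ mem_insert_self a _), hyS⟩
    by_contra! hlarge
    have hcard : #T = k + 1 := le_antisymm (hS' T hTS hT) hlarge
    obtain ⟨y, hyT, hyi⟩ := hc.exists_mem_color_eq hTS hT hcard hi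
    have hyK : y ∈ K :=
      mem_insert_of_mem (mem_filter.2 ⟨hTS hyT, hyi, (hx i hi).2.2 T hTS hT hcard y hyT hyi⟩)
    exact (mem_sdiff.1 (hTK hyT)).2 hyK

/-- **Dilworth's theorem**, with a chain partition recorded as a colouring. -/
theorem WidthLE.exists_isChainColoring {S : Finset β} {k : ℕ} (h : WidthLE S k) :
    ∃ c, IsChainColoring S k c := by
  classical
  induction S using Finset.strongInduction generalizing k with
  | H S ih =>
  rcases S.eq_empty_or_nonempty with rfl | hne
  · exact ⟨0, ⟨by simp, by simp⟩⟩
  obtain ⟨a, ha⟩ := S.exists_maximal hne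
  obtain ⟨m, rfl⟩ : ∃ m, k = m + 1 := by
    have := h {a} (singleton_subset_iff.2 ha.prop) (by simp)
    exact Nat.exists_eq_add_one.2 (by simpa using this : 1 ≤ k)
  obtain ⟨c, hc⟩ := ih (S.erase a) (erase_ssubset ha.prop) (h.mono (erase_subset a S))
  obtain ⟨K, hKS, haK, hK, hwK⟩ := exists_chain_widthLE_sdiff h ha hc
  obtain ⟨c', hc'⟩ := ih (S \ K) (sdiff_ssubset hKS ⟨a, haK⟩) hwK
  exact ⟨_, hc'.insertChain hK⟩

end Dilworth

section ItemsetTaxonomy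

variable {α : Type*} [PartialOrder α]

lemma lowerClosure_le_lowerClosure_iff {A B : Finset α} :
    lowerClosure (A : Set α) ≤ lowerClosure (B : Set α) ↔ ∀ a ∈ A, ∃ b ∈ B, a ≤ b := by
  simp [lowerClosure_le, Set.subset_def, mem_lowerClosure]

lemma injOn_lowerClosure :
    Set.InjOn (fun A : Finset α => lowerClosure (A : Set α))
      {A | IsAntichain (· ≤ ·) (A : Set α)} := by
  have key : ∀ {A B : Finset α}, IsAntichain (· ≤ ·) (A : Set α) →
      lowerClosure (A : Set α) = lowerClosure (B : Set α) → A ⊆ B := by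
    intro A B hA hAB a ha
    obtain ⟨b, hb, hab⟩ := lowerClosure_le_lowerClosure_iff.1 hAB.le a ha
    obtain ⟨a', ha', hba'⟩ := lowerClosure_le_lowerClosure_iff.1 hAB.ge b hb
    obtain rfl : a = a' := hA.eq ha ha' (hab.trans hba')
    rwa [le_antisymm hab hba']
  exact fun A hA B hB h => (key hA h).antisymm (key hB h.symm)

lemma card_le_of_isChain [Fintype α] {C : Finset (LowerSet α)}
    (hC : IsChain (· ≤ ·) (C : Set (LowerSet α))) : #C ≤ Fintype.card α + 1 := by
  have hinj : Set.InjOn (fun s : LowerSet α => (s : Set α).ncard) C := by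
    intro s hs t ht h
    by_contra hne
    rcases hC hs ht hne with hst | hts
    · exact hne (SetLike.coe_injective (Set.eq_of_subset_of_ncard_le hst h.ge))
    · exact hne (SetLike.coe_injective (Set.eq_of_subset_of_ncard_le hts h.le)).symm
  have hmaps : ∀ s ∈ C, (s : Set α).ncard ∈ range (Fintype.card α + 1) := fun s _ =>
    mem_range.2 (Nat.lt_succ_of_le ((Set.ncard_le_card _).trans_eq (Nat.card_eq_fintype_card)))
  simpa using card_le_card_of_injOn _ hmaps hinj

lemma isAntichain_image_lowerClosure [DecidableEq (LowerSet α)] {𝒜 : Finset (Finset α)}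
    (h𝒜 : ∀ A ∈ 𝒜, ∀ B ∈ 𝒜, A ≠ B → ¬ (∀ a ∈ A, ∃ b ∈ B, a ≤ b)) :
    IsAntichain (· ≤ ·)
      ((𝒜.image fun A : Finset α => lowerClosure (A : Set α)) : Set (LowerSet α)) := by
  rintro _ hs _ ht hne hle
  obtain ⟨A, hA, rfl⟩ := mem_image.1 hs
  obtain ⟨B, hB, rfl⟩ := mem_image.1 ht
  exact h𝒜 A hA B hB (fun h => hne (h ▸ rfl)) (lowerClosure_le_lowerClosure_iff.1 hle)

lemma widthLE_image_lowerClosure [DecidableEq (LowerSet α)] {𝔄 : Finset (Finset α)} {w : ℕ}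
    (h𝔄 : ∀ A ∈ 𝔄, IsAntichain (· ≤ ·) (A : Set α))
    (hwidth : ∀ 𝒜 : Finset (Finset α), (∀ A ∈ 𝒜, IsAntichain (· ≤ ·) (A : Set α)) →
      (∀ A ∈ 𝒜, ∀ B ∈ 𝒜, A ≠ B → ¬ (∀ a ∈ A, ∃ b ∈ B, a ≤ b)) → #𝒜 ≤ w) :
    WidthLE (𝔄.image fun A : Finset α => lowerClosure (A : Set α)) w := by
  intro 𝒯 h𝒯 h𝒯anti
  set 𝒜 := 𝔄.filter fun A : Finset α => lowerClosure (A : Set α) ∈ 𝒯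
  have himage : 𝒜.image (fun A : Finset α => lowerClosure (A : Set α)) = 𝒯 := by
    refine (image_subset_iff.2 fun A hA => (mem_filter.1 hA).2).antisymm fun s hs => ?_
    obtain ⟨A, hA, rfl⟩ := mem_image.1 (h𝒯 hs)
    exact mem_image_of_mem _ (mem_filter.2 ⟨hA, hs⟩)
  have h𝒜 : ∀ A ∈ 𝒜, IsAntichain (· ≤ ·) (A : Set α) := fun A hA => h𝔄 A (mem_filter.1 hA).1
  have hinj : Set.InjOn (fun A : Finset α => lowerClosure (A : Set α)) 𝒜 :=
    injOn_lowerClosure.mono h𝒜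
  rw [← himage, card_image_of_injOn hinj]
  refine hwidth 𝒜 h𝒜 fun A hA B hB hAB hle => ?_
  exact h𝒯anti (mem_filter.1 hA).2 (mem_filter.1 hB).2 (fun h => hAB (hinj hA hB h))
    (lowerClosure_le_lowerClosure_iff.2 hle)

end ItemsetTaxonomy

theorem card_solution_taxonomy_le_general
    {α : Type*} [Fintype α] [PartialOrder α]
    (w : ℕ)
    (hwidth : ∀ 𝒜 : Finset (Finset α),
      (∀ A ∈ 𝒜, IsAntichain (· ≤ ·) (A : Set α)) →
      (∀ A ∈ 𝒜, ∀ B ∈ 𝒜, A ≠ B → ¬ (∀ a ∈ A, ∃ b ∈ B, a ≤ b)) →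
      𝒜.card ≤ w) :
    Set.ncard {𝒜 : Finset (Finset α) |
      (∀ A ∈ 𝒜, IsAntichain (· ≤ ·) (A : Set α)) ∧
      ∀ A ∈ 𝒜, ∀ B ∈ 𝒜, A ≠ B → ¬ (∀ a ∈ A, ∃ b ∈ B, a ≤ b)}
      ≤ (Fintype.card α + 2) ^ w := by
  classical
  set 𝔄 : Finset (Finset α) := univ.filter fun A => IsAntichain (· ≤ ·) (A : Set α)
  have h𝔄 : ∀ A ∈ 𝔄, IsAntichain (· ≤ ·) (A : Set α) := fun A hA => (mem_filter.1 hA).2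
  set S := 𝔄.image fun A : Finset α => lowerClosure (A : Set α)
  obtain ⟨c, hc⟩ := (widthLE_image_lowerClosure h𝔄 hwidth).exists_isChainColoring
  calc _ ≤ {𝒯 | 𝒯 ⊆ S ∧ IsAntichain (· ≤ ·) (𝒯 : Set (LowerSet α))}.ncard := by
        refine Set.ncard_le_ncard_of_injOn (·.image fun A : Finset α => lowerClosure (A : Set α))
          (fun 𝒜 h𝒜 => ⟨image_subset_image ?_, isAntichain_image_lowerClosure h𝒜.2⟩)
          ((image_injOn_powerset_of_injOn (injOn_lowerClosure.mono h𝔄)).mono ?_)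
          (S.powerset.finite_toSet.subset fun 𝒯 h𝒯 => mem_powerset.2 h𝒯.1)
        · exact fun A hA => mem_filter.2 ⟨mem_univ A, h𝒜.1 A hA⟩
        · exact fun 𝒜 h𝒜 => mem_powerset.2 fun A hA => mem_filter.2 ⟨mem_univ A, h𝒜.1 A hA⟩
    _ ≤ (Fintype.card α + 1 + 1) ^ w := hc.ncard_antichains_le fun C _ hC => card_le_of_isChain hC

/-- Let `Ψ = (I, ≤)` be a finite poset and let `w` be the width of the itemset taxonomy
`I(Ψ)` (the antichains of `Ψ` ordered by `⊑`, where `A ⊑ B` iff every `a ∈ A` satisfies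
`a ≤ b` for some `b ∈ B`); that is, there is a family of `w` antichains of `Ψ` pairwise
incomparable under `⊑`, and every such family has at most `w` members. Then the number
of antichains of `I(Ψ)` (the cardinality of the solution taxonomy `S(Ψ)`) is at most
`(|I| + 2) ^ w`. -/
theorem card_solution_taxonomy_le
    {α : Type*} [Fintype α] [PartialOrder α] [DecidableEq α]
    (w : ℕ)
    (hex : ∃ 𝒜 : Finset (Finset α),
      (∀ A ∈ 𝒜, IsAntichain (· ≤ ·) (A : Set α)) ∧
      (∀ A ∈ 𝒜, ∀ B ∈ 𝒜, A ≠ B → ¬ (∀ a ∈ A, ∃ b ∈ B, a ≤ b)) ∧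
      𝒜.card = w)
    (hwidth : ∀ 𝒜 : Finset (Finset α),
      (∀ A ∈ 𝒜, IsAntichain (· ≤ ·) (A : Set α)) →
      (∀ A ∈ 𝒜, ∀ B ∈ 𝒜, A ≠ B → ¬ (∀ a ∈ A, ∃ b ∈ B, a ≤ b)) →
      𝒜.card ≤ w) :
    Set.ncard {𝒜 : Finset (Finset α) |
      (∀ A ∈ 𝒜, IsAntichain (· ≤ ·) (A : Set α)) ∧
      ∀ A ∈ 𝒜, ∀ B ∈ 𝒜, A ≠ B → ¬ (∀ a ∈ A, ∃ b ∈ B, a ≤ b)}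
      ≤ (Fintype.card α + 2) ^ w :=
  card_solution_taxonomy_le_general w hwidth
end

section
/- For every natural number n ≥ 1, there exists a finite partially ordered set P with exactly n antichains and with at most (⌊log₂ n⌋ + 1)² elements. -/
/-!
Antichains of a disjoint union `P ⊕ Q` are exactly the unions of an antichain of `P` and one
of `Q`, so their numbers multiply; adjoining a top element to `P` adds exactly one antichain,
namely `{⊤}`. Hence adding an isolated point doubles the number of antichains, and adding an
isolated point and then a top sends `k` to `2k + 1`. Following the binary expansion of `n` from
the empty poset gives a poset with `n` antichains and at most `2 ⌊log₂ n⌋ ≤ (⌊log₂ n⌋ + 1)²`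
elements.
-/

open Set

def antichains (α : Type*) [LE α] : Set (Set α) := {A | IsAntichain (· ≤ ·) A}

section Antichains

variable {α β : Type*} [LE α] [LE β]

lemma mem_antichains {A : Set α} : A ∈ antichains α ↔ IsAntichain (· ≤ ·) A := Iff.rfl

lemma antichains_eq_univ_of_subsingleton [Subsingleton α] : antichains α = univ :=
  eq_univ_of_forall fun _ => subsingleton_of_subsingleton.isAntichain _

lemma ncard_antichains_of_subsingleton [Subsingleton α] [Fintype α] :
    (antichains α).ncard = 2 ^ Fintype.card α := by
  rw [antichains_eq_univ_of_subsingleton, ncard_univ, Nat.card_eq_fintype_card, Fintype.card_set]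

def antichainsSumEquiv : antichains (α ⊕ β) ≃ antichains α × antichains β where
  toFun A :=
    (⟨Sum.inl ⁻¹' A.1, fun _ ha _ hb hne hle =>
        A.2 ha hb (Sum.inl_injective.ne hne) (Sum.inl_le_inl_iff.2 hle)⟩,
     ⟨Sum.inr ⁻¹' A.1, fun _ ha _ hb hne hle =>
        A.2 ha hb (Sum.inr_injective.ne hne) (Sum.inr_le_inr_iff.2 hle)⟩)
  invFun p := ⟨Sum.inl '' p.1.1 ∪ Sum.inr '' p.2.1, by
    rintro _ (⟨a, ha, rfl⟩ | ⟨a, ha, rfl⟩) _ (⟨b, hb, rfl⟩ | ⟨b, hb, rfl⟩) hne hle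
    · exact p.1.2 ha hb (ne_of_apply_ne _ hne) (Sum.inl_le_inl_iff.1 hle)
    · exact Sum.not_inl_le_inr hle
    · exact Sum.not_inr_le_inl hle
    · exact p.2.2 ha hb (ne_of_apply_ne _ hne) (Sum.inr_le_inr_iff.1 hle)⟩
  left_inv A := by
    ext (a | b) <;> simp
  right_inv p := by
    ext <;> simp

lemma ncard_antichains_sum :
    (antichains (α ⊕ β)).ncard = (antichains α).ncard * (antichains β).ncard := by
  simp only [← Nat.card_coe_set_eq]
  rw [← Nat.card_prod]
  exact Nat.card_congr antichainsSumEquiv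

lemma antichains_withTop :
    antichains (WithTop α) = insert {⊤} ((fun A => (↑) '' A) '' antichains α) := by
  ext A
  simp only [mem_insert_iff, mem_image, mem_antichains]
  constructor
  · intro hA
    by_cases htop : ⊤ ∈ A
    · exact .inl <| eq_singleton_iff_unique_mem.2
        ⟨htop, fun x hx => by_contra fun hne => hA hx htop hne le_top⟩
    · refine .inr ⟨(↑) ⁻¹' A, fun a ha b hb hne hle => ?_, ?_⟩
      · exact hA ha hb (WithTop.coe_injective.ne hne) (WithTop.coe_le_coe.2 hle)
      · refine image_preimage_eq_of_subset fun x hx => ?_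
        induction x using WithTop.recTopCoe with
        | top => exact absurd hx htop
        | coe a => exact mem_range_self a
  · rintro (rfl | ⟨B, hB, rfl⟩)
    · exact subsingleton_singleton.isAntichain _
    · rintro _ ⟨a, ha, rfl⟩ _ ⟨b, hb, rfl⟩ hne hle
      exact hB ha hb (ne_of_apply_ne _ hne) (WithTop.coe_le_coe.1 hle)

lemma ncard_antichains_withTop [Finite α] :
    (antichains (WithTop α)).ncard = (antichains α).ncard + 1 := by
  have htop : {⊤} ∉ (fun A => ((↑) : α → WithTop α) '' A) '' antichains α := by
    rintro ⟨B, -, hB⟩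
    obtain ⟨a, -, ha⟩ := hB.symm ▸ mem_singleton (⊤ : WithTop α)
    exact WithTop.coe_ne_top ha
  rw [antichains_withTop, ncard_insert_of_notMem htop,
    ncard_image_of_injective _ (image_injective.2 WithTop.coe_injective)]

end Antichains

theorem exists_poset_ncard_antichains_eq_and_card_le (n : ℕ) (hn : 1 ≤ n) :
    ∃ (P : Type) (_ : Fintype P) (_ : PartialOrder P),
      (antichains P).ncard = n ∧ Fintype.card P ≤ 2 * Nat.log 2 n := by
  induction n using Nat.strong_induction_on with
  | _ n ih =>
    obtain rfl | hn2 := hn.eq_or_lt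
    · exact ⟨Empty, inferInstance, inferInstance, ncard_antichains_of_subsingleton, by simp⟩
    obtain ⟨P, _, _, hP, hcard⟩ := ih (n / 2) (by omega) (by omega)
    have hlog : Nat.log 2 n = Nat.log 2 (n / 2) + 1 := by
      rw [Nat.log_div_base]
      have := Nat.log_pos (b := 2) one_lt_two hn2
      omega
    have hdouble : (antichains (P ⊕ PUnit)).ncard = 2 * (n / 2) := by
      rw [ncard_antichains_sum, hP, ncard_antichains_of_subsingleton, Fintype.card_punit]
      ring
    have hsize : Fintype.card (P ⊕ PUnit) = Fintype.card P + 1 := by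
      rw [Fintype.card_sum, Fintype.card_punit]
    obtain heven | hodd := Nat.even_or_odd n
    · refine ⟨P ⊕ PUnit, inferInstance, inferInstance, ?_, ?_⟩
      · rw [hdouble, Nat.two_mul_div_two_of_even heven]
      · omega
    · refine ⟨WithTop (P ⊕ PUnit), inferInstance, inferInstance, ?_, ?_⟩
      · rw [ncard_antichains_withTop, hdouble, Nat.two_mul_div_two_add_one_of_odd hodd]
      · have : Fintype.card (WithTop (P ⊕ PUnit)) = Fintype.card (P ⊕ PUnit) + 1 :=
          Fintype.card_option
        omega

/-- For every natural number `n ≥ 1`, there exists a finite poset `P` with exactly `n`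
antichains and with at most `(⌊log₂ n⌋ + 1)²` elements. -/
theorem exists_small_poset_with_n_antichains (n : ℕ) (hn : 1 ≤ n) :
    ∃ (P : Type) (_ : Fintype P) (_ : PartialOrder P),
      Set.ncard {A : Set P | IsAntichain (· ≤ ·) A} = n ∧
      Fintype.card P ≤ (Nat.log 2 n + 1) ^ 2 := by
  obtain ⟨P, _, _, hP, hcard⟩ := exists_poset_ncard_antichains_eq_and_card_le n hn
  exact ⟨P, inferInstance, inferInstance, hP, hcard.trans (by nlinarith)⟩
end
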